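/- arXiv:1908.10324 — 2 statements merged into one kernel-verified Lean document; each statement's English description precedes it below -/
import Mathlib

section
/- Let q_0 and q_1 be probability measures on [−τ,τ] whose moments of orders 0,1,...,2K all agree. Then for any n ≥ 1, ∑_{l=1}^{⌊n/2⌋} (m_1(2l) − m_0(2l))^2 · C(n,2l)/n^{2l} ≤ 4·τ^{4K}·e^{τ^4}/(2K)!, where m_i(2l) denotes the 2l-th moment of q_i and C(n,2l) is the binomial coefficient. -/
open MeasureTheory

lemma mom_bound (τ : ℝ) (q : Measure ℝ) [IsProbabilityMeasure q]
    (hs : q (Set.Icc (-τ) τ)ᶜ = 0) (m : ℕ) : |∫ t, t ^ m ∂q| ≤ τ ^ m := by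
  have hae : ∀ᵐ t ∂q, t ∈ Set.Icc (-τ) τ := MeasureTheory.mem_ae_iff.mpr hs
  have hae2 : ∀ᵐ t ∂q, ‖t ^ m‖ ≤ τ ^ m := by
    filter_upwards [hae] with t ht
    rw [Real.norm_eq_abs, abs_pow]
    exact pow_le_pow_left₀ (abs_nonneg t) (abs_le.mpr ⟨ht.1, ht.2⟩) m
  calc |∫ t, t ^ m ∂q| = ‖∫ t, t ^ m ∂q‖ := (Real.norm_eq_abs _).symm
    _ ≤ τ ^ m * (q Set.univ).toReal := norm_integral_le_of_norm_le_const hae2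
    _ = τ ^ m := by simp

theorem moment_matching_sum_bound (τ : ℝ) (hτ : 0 < τ) (K n : ℕ) (hK : 0 < K)
    (hKn : 2 * K ≤ n)
    (q₀ q₁ : Measure ℝ) [IsProbabilityMeasure q₀] [IsProbabilityMeasure q₁]
    (hs₀ : q₀ (Set.Icc (-τ) τ)ᶜ = 0) (hs₁ : q₁ (Set.Icc (-τ) τ)ᶜ = 0)
    (hmatch : ∀ l ≤ 2 * K, ∫ t, t ^ l ∂q₀ = ∫ t, t ^ l ∂q₁) :
    ∑ l ∈ Finset.Icc 1 (n / 2),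
        ((∫ t, t ^ (2 * l) ∂q₁) - ∫ t, t ^ (2 * l) ∂q₀) ^ 2 *
          (n.choose (2 * l) : ℝ) / (n : ℝ) ^ (2 * l)
      ≤ 4 * τ ^ (4 * K) * Real.exp (τ ^ 4) / (Nat.factorial (2 * K) : ℝ) := by
  have hτ0 : (0:ℝ) ≤ τ := hτ.le
  set M := n / 2 with hM
  have hKM : K ≤ M := by
    rw [hM]; omega
  have hn0 : 0 < n := by omega
  set f : ℕ → ℝ := fun l =>
    ((∫ t, t ^ (2 * l) ∂q₁) - ∫ t, t ^ (2 * l) ∂q₀) ^ 2 *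
      (n.choose (2 * l) : ℝ) / (n : ℝ) ^ (2 * l) with hf
  have hC0 : (0:ℝ) ≤ 4 * τ ^ (4 * K) / (Nat.factorial (2 * K) : ℝ) := by positivity
  -- restrict to l > K
  have hstep1 : ∑ l ∈ Finset.Icc 1 M, f l = ∑ l ∈ Finset.Icc (K+1) M, f l := by
    refine (Finset.sum_subset ?_ ?_).symm
    · intro l hl
      simp only [Finset.mem_Icc] at hl ⊢
      omega
    · intro l hl hnl
      simp only [Finset.mem_Icc] at hl hnl
      have h2l : 2 * l ≤ 2 * K := by omega
      rw [hf]
      simp only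
      rw [hmatch (2 * l) h2l]
      simp
  -- per-term bound
  have key : ∀ l ∈ Finset.Icc (K+1) M,
      f l ≤ 4 * τ ^ (4 * K) / (Nat.factorial (2 * K) : ℝ) *
        ((τ ^ 4) ^ (l - K) / (Nat.factorial (l - K) : ℝ)) := by
    intro l hl
    simp only [Finset.mem_Icc] at hl
    have hKl : K < l := by omega
    have h1 : |∫ t, t ^ (2*l) ∂q₀| ≤ τ ^ (2*l) := mom_bound τ q₀ hs₀ _
    have h2 : |∫ t, t ^ (2*l) ∂q₁| ≤ τ ^ (2*l) := mom_bound τ q₁ hs₁ _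
    set d : ℝ := (∫ t, t ^ (2*l) ∂q₁) - ∫ t, t ^ (2*l) ∂q₀ with hd
    have habs : |d| ≤ 2 * τ ^ (2*l) := by
      calc |d| ≤ |∫ t, t ^ (2*l) ∂q₁| + |∫ t, t ^ (2*l) ∂q₀| := abs_sub _ _
        _ ≤ 2 * τ ^ (2*l) := by linarith
    have hdsq : d ^ 2 ≤ 4 * τ ^ (4*l) := by
      calc d ^ 2 = |d| ^ 2 := (sq_abs d).symm
        _ ≤ (2 * τ ^ (2*l)) ^ 2 := pow_le_pow_left₀ (abs_nonneg _) habs 2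
        _ = 4 * τ ^ (4*l) := by
            rw [mul_pow, ← pow_mul, show 2*l*2 = 4*l from by ring]; norm_num
    have hcn : (n.choose (2*l) : ℝ) / (n:ℝ) ^ (2*l) ≤ 1 / (Nat.factorial (2*l) : ℝ) := by
      have hn : (0:ℝ) < (n:ℝ) ^ (2*l) := by positivity
      have hfac : (0:ℝ) < (Nat.factorial (2*l) : ℝ) := by positivity
      rw [div_le_div_iff₀ hn hfac]
      have h := Nat.choose_le_pow_div (α := ℝ) (2*l) n
      calc (n.choose (2*l) : ℝ) * (Nat.factorial (2*l) : ℝ)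
          ≤ ((n:ℝ) ^ (2*l) / (Nat.factorial (2*l) : ℝ)) * (Nat.factorial (2*l) : ℝ) := by
            exact mul_le_mul_of_nonneg_right h hfac.le
        _ = 1 * (n:ℝ) ^ (2*l) := by field_simp
    have hfact : (Nat.factorial (2*K) : ℝ) * (Nat.factorial (l-K) : ℝ)
        ≤ (Nat.factorial (2*l) : ℝ) := by
      have h1' : Nat.factorial (l-K) ≤ Nat.factorial (2*(l-K)) :=
        Nat.factorial_le (by omega)
      have h2' : Nat.factorial (2*K) * Nat.factorial (2*(l-K)) ≤ Nat.factorial (2*l) := by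
        have := Nat.factorial_mul_factorial_dvd_factorial_add (2*K) (2*(l-K))
        rw [show 2*K + 2*(l-K) = 2*l from by omega] at this
        exact Nat.le_of_dvd (Nat.factorial_pos _) this
      calc (Nat.factorial (2*K) : ℝ) * (Nat.factorial (l-K) : ℝ)
          ≤ (Nat.factorial (2*K) : ℝ) * (Nat.factorial (2*(l-K)) : ℝ) := by
            exact mul_le_mul_of_nonneg_left (by exact_mod_cast h1') (by positivity)
        _ ≤ (Nat.factorial (2*l) : ℝ) := by exact_mod_cast h2'
    have hpow : τ ^ (4*l) = τ ^ (4*K) * (τ ^ 4) ^ (l - K) := by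
      rw [← pow_mul, ← pow_add]
      congr 1
      omega
    calc f l = d ^ 2 * ((n.choose (2*l) : ℝ) / (n:ℝ) ^ (2*l)) := by
          rw [hf]; simp only; rw [mul_div_assoc]
      _ ≤ (4 * τ ^ (4*l)) * (1 / (Nat.factorial (2*l) : ℝ)) := by
          apply mul_le_mul hdsq hcn (by positivity) (by positivity)
      _ = 4 * τ ^ (4*l) / (Nat.factorial (2*l) : ℝ) := by ring
      _ ≤ 4 * τ ^ (4*l) / ((Nat.factorial (2*K) : ℝ) * (Nat.factorial (l-K) : ℝ)) := by
          apply div_le_div_of_nonneg_left (by positivity) (by positivity) hfact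
      _ = 4 * τ ^ (4 * K) / (Nat.factorial (2 * K) : ℝ) *
            ((τ ^ 4) ^ (l - K) / (Nat.factorial (l - K) : ℝ)) := by
          rw [hpow]; field_simp
  -- reindex and bound by exp
  have hstep3 : ∑ l ∈ Finset.Icc (K+1) M, (τ ^ 4) ^ (l - K) / (Nat.factorial (l - K) : ℝ)
      ≤ Real.exp (τ ^ 4) := by
    have hre : Finset.Icc (K+1) M =
        (Finset.Icc 1 (M - K)).map (addLeftEmbedding K) := by
      rw [Finset.map_add_left_Icc, show K + (M - K) = M from by omega]
    rw [hre, Finset.sum_map]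
    simp only [addLeftEmbedding_apply, Nat.add_sub_cancel_left]
    calc ∑ j ∈ Finset.Icc 1 (M - K), (τ ^ 4) ^ j / (Nat.factorial j : ℝ)
        ≤ ∑ j ∈ Finset.range (M - K + 1), (τ ^ 4) ^ j / (Nat.factorial j : ℝ) := by
          apply Finset.sum_le_sum_of_subset_of_nonneg
          · intro j hj
            simp only [Finset.mem_Icc] at hj
            simp only [Finset.mem_range]
            omega
          · intro j _ _
            positivity
      _ ≤ Real.exp (τ ^ 4) := Real.sum_le_exp_of_nonneg (by positivity) _
  calc ∑ l ∈ Finset.Icc 1 M, f l = ∑ l ∈ Finset.Icc (K+1) M, f l := hstep1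
    _ ≤ ∑ l ∈ Finset.Icc (K+1) M,
          4 * τ ^ (4 * K) / (Nat.factorial (2 * K) : ℝ) *
            ((τ ^ 4) ^ (l - K) / (Nat.factorial (l - K) : ℝ)) := Finset.sum_le_sum key
    _ = 4 * τ ^ (4 * K) / (Nat.factorial (2 * K) : ℝ) *
          ∑ l ∈ Finset.Icc (K+1) M, (τ ^ 4) ^ (l - K) / (Nat.factorial (l - K) : ℝ) := by
        rw [Finset.mul_sum]
    _ ≤ 4 * τ ^ (4 * K) / (Nat.factorial (2 * K) : ℝ) * Real.exp (τ ^ 4) := by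
        exact mul_le_mul_of_nonneg_left hstep3 hC0
    _ = 4 * τ ^ (4 * K) * Real.exp (τ ^ 4) / (Nat.factorial (2 * K) : ℝ) := by ring
end

section
/- Let F : Θ → ℝ be a functional, Q_0 and Q_1 priors on Θ, and for each θ let P_θ be a probability distribution of the data. Define p_i = ∫ P_θ dQ_i(θ) for the mixture distribution of the data, Δ = |E_{Q_0}F − E_{Q_1}F|, and δ_i = E_{Q_i}|F(θ) − E_{Q_i}F|. Then for every estimator T̂ (a measurable function of the data), sup_{θ∈Θ} E_{P_θ}|T̂ − F(θ)| ≥ (Δ/4)·(1 − TV(p_0, p_1)) − (δ_0 + δ_1)/2. -/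
/-!
Le Cam's two-point argument with fuzzy hypotheses. Let `mᵢ = E_{Qᵢ} F` and `Δ = |m₀ - m₁|`.
Every `t` is at distance at least `Δ / 2` from `m₀` or from `m₁`; testing with
`A = {|T - m₀| ≥ Δ / 2}` shows `E_{p₀}|T - m₀| + E_{p₁}|T - m₁| ≥ (Δ / 2) (p₀ A + p₁ Aᶜ)`, and
`p₀ A + p₁ Aᶜ ≥ 1 - TV(p₀, p₁)`. On the other hand, by the triangle inequality through `F θ`,
`E_{pᵢ}|T - mᵢ|` is at most the maximal risk plus `δᵢ`.
-/

open MeasureTheory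

/-- Total variation distance between two measures, as the supremum over measurable sets. -/
noncomputable def tvDist {α : Type*} [MeasurableSpace α] (p q : Measure α) : ℝ :=
  ⨆ s : {s : Set α // MeasurableSet s}, |(p s).toReal - (q s).toReal|

open ENNReal

section TotalVariation

variable {α : Type*} [MeasurableSpace α] {p q : Measure α} {s : Set α}

theorem abs_measureReal_sub_le_tvDist [IsFiniteMeasure p] [IsFiniteMeasure q]
    (hs : MeasurableSet s) : |p.real s - q.real s| ≤ tvDist p q := by
  refine le_ciSup (f := fun t : {t : Set α // MeasurableSet t} => |p.real t - q.real t|)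
    ⟨p.real .univ + q.real .univ, ?_⟩ ⟨s, hs⟩
  rintro _ ⟨t, rfl⟩
  exact abs_sub_le_of_nonneg_of_le measureReal_nonneg
    (le_add_of_le_of_nonneg (measureReal_mono (Set.subset_univ _)) measureReal_nonneg)
    measureReal_nonneg
    (le_add_of_nonneg_of_le measureReal_nonneg (measureReal_mono (Set.subset_univ _)))

theorem ofReal_one_sub_tvDist_le [IsProbabilityMeasure p] [IsProbabilityMeasure q]
    (hs : MeasurableSet s) : ENNReal.ofReal (1 - tvDist p q) ≤ p s + q sᶜ := by
  rw [ENNReal.ofReal_le_iff_le_toReal (by finiteness), ENNReal.toReal_add (by finiteness)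
    (by finiteness)]
  change 1 - tvDist p q ≤ p.real s + q.real sᶜ
  rw [probReal_compl_eq_one_sub hs]
  linarith [abs_measureReal_sub_le_tvDist (p := p) (q := q) hs, neg_abs_le (p.real s - q.real s)]

end TotalVariation

theorem mul_measure_le_lintegral {α : Type*} [MeasurableSpace α] {μ : Measure α}
    {f : α → ℝ≥0∞} {s : Set α} (hs : MeasurableSet s) {ε : ℝ≥0∞} (hε : ∀ x ∈ s, ε ≤ f x) :
    ε * μ s ≤ ∫⁻ x, f x ∂μ := by
  rw [← lintegral_indicator_const hs]
  refine lintegral_mono fun x => ?_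
  by_cases hx : x ∈ s
  · simpa [hx] using hε x hx
  · simp [hx]

/-- Le Cam's two-point bound, tested on `{x | ε ≤ f₀ x}`. -/
theorem mul_ofReal_one_sub_tvDist_le_lintegral_add {𝒳 : Type*} [MeasurableSpace 𝒳]
    {p₀ p₁ : Measure 𝒳} [IsProbabilityMeasure p₀] [IsProbabilityMeasure p₁]
    {f₀ f₁ : 𝒳 → ℝ≥0∞} (hf₀ : Measurable f₀) {ε : ℝ≥0∞} (hε : ∀ x, ε ≤ f₀ x ∨ ε ≤ f₁ x) :
    ε * ENNReal.ofReal (1 - tvDist p₀ p₁) ≤ ∫⁻ x, f₀ x ∂p₀ + ∫⁻ x, f₁ x ∂p₁ := by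
  set A := {x | ε ≤ f₀ x}
  have hA : MeasurableSet A := measurableSet_le measurable_const hf₀
  calc ε * ENNReal.ofReal (1 - tvDist p₀ p₁) ≤ ε * (p₀ A + p₁ Aᶜ) := by
        gcongr; exact ofReal_one_sub_tvDist_le hA
    _ = ε * p₀ A + ε * p₁ Aᶜ := mul_add _ _ _
    _ ≤ ∫⁻ x, f₀ x ∂p₀ + ∫⁻ x, f₁ x ∂p₁ :=
        add_le_add (mul_meas_ge_le_lintegral₀ hf₀.aemeasurable ε)
          (mul_measure_le_lintegral hA.compl fun x hx => (hε x).resolve_left hx)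

theorem half_abs_sub_le_abs_sub_or_le_abs_sub (m₀ m₁ t : ℝ) :
    |m₀ - m₁| / 2 ≤ |t - m₀| ∨ |m₀ - m₁| / 2 ≤ |t - m₁| := by
  by_contra! h
  linarith [abs_sub_le m₀ t m₁, abs_sub_comm m₀ t]

theorem lintegral_ofReal_abs_sub_le {𝒳 : Type*} [MeasurableSpace 𝒳] {μ : Measure 𝒳}
    [IsProbabilityMeasure μ] (T : 𝒳 → ℝ) (a m : ℝ) :
    ∫⁻ x, ENNReal.ofReal |T x - m| ∂μ
      ≤ ∫⁻ x, ENNReal.ofReal |T x - a| ∂μ + ENNReal.ofReal |a - m| :=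
  calc ∫⁻ x, ENNReal.ofReal |T x - m| ∂μ
      ≤ ∫⁻ x, (ENNReal.ofReal |T x - a| + ENNReal.ofReal |a - m|) ∂μ :=
        lintegral_mono fun x => by
          rw [← ENNReal.ofReal_add (abs_nonneg _) (abs_nonneg _)]
          exact ENNReal.ofReal_le_ofReal (abs_sub_le _ _ _)
    _ = ∫⁻ x, ENNReal.ofReal |T x - a| ∂μ + ENNReal.ofReal |a - m| := by
        rw [lintegral_add_right _ measurable_const, lintegral_const, measure_univ, mul_one]

theorem lintegral_bind_ofReal_abs_sub_le {Θ 𝒳 : Type*} [MeasurableSpace Θ] [MeasurableSpace 𝒳]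
    {P : Θ → Measure 𝒳} [∀ θ, IsProbabilityMeasure (P θ)] {Q : Measure Θ}
    [IsProbabilityMeasure Q] {F : Θ → ℝ} (hF : Integrable F Q) (T : 𝒳 → ℝ) (m : ℝ) :
    ∫⁻ x, ENNReal.ofReal |T x - m| ∂(Q.bind P)
      ≤ (⨆ θ, ∫⁻ x, ENNReal.ofReal |T x - F θ| ∂(P θ))
        + ENNReal.ofReal (∫ θ, |F θ - m| ∂Q) := by
  set S := ⨆ θ, ∫⁻ x, ENNReal.ofReal |T x - F θ| ∂(P θ)
  calc ∫⁻ x, ENNReal.ofReal |T x - m| ∂(Q.bind P)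
      ≤ ∫⁻ θ, ∫⁻ x, ENNReal.ofReal |T x - m| ∂(P θ) ∂Q := Measure.lintegral_bind_le _ _ _
    _ ≤ ∫⁻ θ, (S + ENNReal.ofReal |F θ - m|) ∂Q :=
        lintegral_mono fun θ => (lintegral_ofReal_abs_sub_le T (F θ) m).trans
          (add_le_add_left (le_iSup (fun θ => ∫⁻ x, ENNReal.ofReal |T x - F θ| ∂(P θ)) θ) _)
    _ = S + ENNReal.ofReal (∫ θ, |F θ - m| ∂Q) := by
        rw [lintegral_add_left' aemeasurable_const, lintegral_const, measure_univ, mul_one,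
          ofReal_integral_eq_lintegral_ofReal (f := fun θ => |F θ - m|)
            (hF.sub (integrable_const m)).abs (ae_of_all _ fun _ => abs_nonneg _)]

theorem ENNReal.ofReal_sub_div_two_le {a d : ℝ} {S : ℝ≥0∞} (hd : 0 ≤ d)
    (h : ENNReal.ofReal a ≤ 2 * S + ENNReal.ofReal d) : ENNReal.ofReal ((a - d) / 2) ≤ S := by
  rw [ENNReal.ofReal_div_of_pos two_pos, ENNReal.ofReal_sub _ hd, ENNReal.ofReal_ofNat,
    ENNReal.div_le_iff two_ne_zero ofNat_ne_top, mul_comm]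
  exact tsub_le_iff_right.2 h

theorem le_cam_composite_general {Θ 𝒳 : Type*} [MeasurableSpace Θ] [MeasurableSpace 𝒳]
    (P : Θ → Measure 𝒳) (hP : Measurable P) (hPprob : ∀ θ, IsProbabilityMeasure (P θ))
    (Q₀ Q₁ : Measure Θ) [IsProbabilityMeasure Q₀] [IsProbabilityMeasure Q₁]
    (F : Θ → ℝ) (hF₀ : Integrable F Q₀) (hF₁ : Integrable F Q₁)
    (T : 𝒳 → ℝ) (hT : Measurable T) :
    ENNReal.ofReal
        ((|∫ θ, F θ ∂Q₀ - ∫ θ, F θ ∂Q₁| / 4) * (1 - tvDist (Q₀.bind P) (Q₁.bind P))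
          - ((∫ θ, |F θ - ∫ θ', F θ' ∂Q₀| ∂Q₀) + ∫ θ, |F θ - ∫ θ', F θ' ∂Q₁| ∂Q₁) / 2)
      ≤ ⨆ θ : Θ, ∫⁻ x, ENNReal.ofReal |T x - F θ| ∂(P θ) := by
  have := hPprob
  have : IsProbabilityMeasure (Q₀.bind P) :=
    isProbabilityMeasure_bind hP.aemeasurable (ae_of_all _ hPprob)
  have : IsProbabilityMeasure (Q₁.bind P) :=
    isProbabilityMeasure_bind hP.aemeasurable (ae_of_all _ hPprob)
  set S := ⨆ θ : Θ, ∫⁻ x, ENNReal.ofReal |T x - F θ| ∂(P θ)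
  set m₀ := ∫ θ, F θ ∂Q₀
  set m₁ := ∫ θ, F θ ∂Q₁
  have two_point := mul_ofReal_one_sub_tvDist_le_lintegral_add (p₀ := Q₀.bind P)
    (p₁ := Q₁.bind P) (f₁ := fun x => ENNReal.ofReal |T x - m₁|)
    (hT.sub_const m₀).abs.ennreal_ofReal fun x =>
      (half_abs_sub_le_abs_sub_or_le_abs_sub m₀ m₁ (T x)).imp
        ENNReal.ofReal_le_ofReal ENNReal.ofReal_le_ofReal
  rw [← ENNReal.ofReal_mul (by positivity)] at two_point
  have total_risk : ENNReal.ofReal (|m₀ - m₁| / 2 * (1 - tvDist (Q₀.bind P) (Q₁.bind P)))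
      ≤ 2 * S + ENNReal.ofReal ((∫ θ, |F θ - m₀| ∂Q₀) + ∫ θ, |F θ - m₁| ∂Q₁) :=
    calc _ ≤ _ := two_point
      _ ≤ (S + ENNReal.ofReal (∫ θ, |F θ - m₀| ∂Q₀))
            + (S + ENNReal.ofReal (∫ θ, |F θ - m₁| ∂Q₁)) :=
          add_le_add (lintegral_bind_ofReal_abs_sub_le hF₀ T m₀)
            (lintegral_bind_ofReal_abs_sub_le hF₁ T m₁)
      _ = _ := by
          rw [ENNReal.ofReal_add (by positivity) (by positivity), two_mul]
          ring
  convert ENNReal.ofReal_sub_div_two_le (by positivity) total_risk using 2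
  ring

theorem le_cam_composite {Θ 𝒳 : Type*} [MeasurableSpace Θ] [MeasurableSpace 𝒳]
    (P : Θ → Measure 𝒳) (hP : Measurable P) (hPprob : ∀ θ, IsProbabilityMeasure (P θ))
    (Q₀ Q₁ : Measure Θ) [IsProbabilityMeasure Q₀] [IsProbabilityMeasure Q₁]
    (F : Θ → ℝ) (hFmeas : Measurable F) (hF₀ : Integrable F Q₀) (hF₁ : Integrable F Q₁)
    (T : 𝒳 → ℝ) (hT : Measurable T) :
    ENNReal.ofReal
        ((|∫ θ, F θ ∂Q₀ - ∫ θ, F θ ∂Q₁| / 4) * (1 - tvDist (Q₀.bind P) (Q₁.bind P))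
          - ((∫ θ, |F θ - ∫ θ', F θ' ∂Q₀| ∂Q₀) + ∫ θ, |F θ - ∫ θ', F θ' ∂Q₁| ∂Q₁) / 2)
      ≤ ⨆ θ : Θ, ∫⁻ x, ENNReal.ofReal |T x - F θ| ∂(P θ) :=
  le_cam_composite_general P hP hPprob Q₀ Q₁ F hF₀ hF₁ T hT
end
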